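/- Let K, B ⊂ ℝ² be convex bodies in general relative position (dim F(K,u) + dim F(B,u) ≤ 1 for all unit vectors u) with 0 ∈ int B. For x ∈ ℝ² \ K let p(K,B,x) ∈ bd K be the unique point such that x ∈ p(K,B,x) + d(K,B,x)·bd B (the B-projection of x onto K). Then the map p(K,B,·) : ℝ² \ K → bd K is Lipschitz continuous. -/

import Mathlib

/-!
Let `x = q₁ + t • b₁` and `y = q₂ + s • b₂` with `t = d(x) ≤ s = d(y)`. Sliding `y` down its ray
to `y' = q₂ + t • b₂` keeps the projection, gives `d(y') = t`, and moves `y` by at most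
`(R_B / ρ_B) ‖x - y‖`, because `d` is `1 / ρ_B`-Lipschitz. Now `x` and `y'` lie on the boundary of
`K + t • B`; their outer unit normals `u₁, u₂` are also normals of `K` at `q₁, q₂` and of `B` at
`b₁, b₂`. In the plane both `q₁ - q₂` and `b₁ - b₂` lie in the wedge `⟪u₁, ·⟫ ≥ 0 ≥ ⟪u₂, ·⟫`,
where `⟪u₁ - u₂, ·⟫` dominates `‖u₁ + u₂‖ / 2` times the norm (if `u₁ = u₂`, general relative
position forces `b₁ = b₂`), so `‖u₁ + u₂‖ ‖q₁ - q₂‖ ≤ 2 ‖x - y'‖`. If instead the normals are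
nearly opposite, the inscribed ball of `K + t • B` keeps `x` and `y'` far apart. Both regimes
give a constant independent of `t`.
-/

open scoped Pointwise

noncomputable section

def suppSet {n : ℕ} (L : Set (EuclideanSpace ℝ (Fin n))) (u : EuclideanSpace ℝ (Fin n)) :
    Set (EuclideanSpace ℝ (Fin n)) :=
  {x ∈ L | ∀ y ∈ L, inner ℝ u y ≤ (inner ℝ u x : ℝ)}

def adim {n : ℕ} (s : Set (EuclideanSpace ℝ (Fin n))) : ℕ :=
  Module.finrank ℝ (affineSpan ℝ s).direction

def bDist {n : ℕ} (K B : Set (EuclideanSpace ℝ (Fin n))) (x : EuclideanSpace ℝ (Fin n)) : ℝ :=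
  sInf {r : ℝ | 0 ≤ r ∧ x ∈ K + r • B}

open Metric Topology

section BDist

variable {n : ℕ} {K B : Set (EuclideanSpace ℝ (Fin n))} {x w q b k z : EuclideanSpace ℝ (Fin n)}
  {r s t : ℝ}

lemma bDist_nonneg : 0 ≤ bDist K B x :=
  Real.sInf_nonneg fun _ hr => hr.1

lemma bDist_le (hr : 0 ≤ r) (hx : x ∈ K + r • B) : bDist K B x ≤ r :=
  csInf_le ⟨0, fun _ h => h.1⟩ ⟨hr, hx⟩

lemma le_bDist (hr : 0 ≤ r) (hx : x ∈ K + r • B) (h : ∀ s, 0 ≤ s → x ∈ K + s • B → t ≤ s) :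
    t ≤ bDist K B x :=
  le_csInf ⟨r, hr, hx⟩ fun s hs => h s hs.1 hs.2

lemma add_smul_mem_add_smul (hq : q ∈ K) (hb : b ∈ B) (t : ℝ) : q + t • b ∈ K + t • B :=
  Set.add_mem_add hq (Set.smul_mem_smul_set hb)

lemma add_mem_add_smul (hB : Convex ℝ B) (hr : 0 ≤ r) (hs : 0 ≤ s) (hx : x ∈ K + r • B)
    (hw : w ∈ s • B) : x + w ∈ K + (r + s) • B := by
  rw [hB.add_smul hr hs, ← add_assoc]
  exact Set.add_mem_add hx hw

lemma bDist_add_le (hB : Convex ℝ B) (hr : 0 ≤ r) (hx : x ∈ K + r • B) (hs : 0 ≤ s)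
    (hw : w ∈ s • B) : bDist K B (x + w) ≤ bDist K B x + s := by
  suffices bDist K B (x + w) - s ≤ bDist K B x by linarith
  exact le_bDist hr hx fun r' hr' hx' =>
    sub_le_iff_le_add.2 (bDist_le (by positivity) (add_mem_add_smul hB hr' hs hx' hw))

lemma mem_smul_of_closedBall_subset {ρ : ℝ} (hρ : 0 < ρ) (hB : closedBall 0 ρ ⊆ B)
    (v : EuclideanSpace ℝ (Fin n)) : v ∈ (‖v‖ / ρ) • B := by
  refine Set.smul_set_mono hB ?_
  rw [smul_closedBall _ _ hρ.le, smul_zero, Real.norm_of_nonneg (by positivity),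
    div_mul_cancel₀ _ hρ.ne']
  exact mem_closedBall_zero_iff.2 le_rfl

lemma bDist_le_add_norm_sub_div {ρ : ℝ} (hB : Convex ℝ B) (hρ : 0 < ρ)
    (hBρ : closedBall 0 ρ ⊆ B) (hr : 0 ≤ r) (hx : x ∈ K + r • B) (y : EuclideanSpace ℝ (Fin n)) :
    bDist K B y ≤ r + ‖y - x‖ / ρ := by
  have := add_mem_add_smul hB hr (by positivity) hx (mem_smul_of_closedBall_subset hρ hBρ (y - x))
  rw [add_sub_cancel] at this
  exact bDist_le (by positivity) this

lemma bDist_add_smul_eq_of_le (hB : Convex ℝ B) (hq : q ∈ K) (hb : b ∈ B) (ht : 0 ≤ t)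
    (hts : t ≤ s) (hs : bDist K B (q + s • b) = s) : bDist K B (q + t • b) = t := by
  have hmem := add_smul_mem_add_smul hq hb t
  refine le_antisymm (bDist_le ht hmem) ?_
  have := bDist_add_le hB ht hmem (sub_nonneg.2 hts) (Set.smul_mem_smul_set hb)
  rw [add_assoc, ← add_smul, add_sub_cancel, hs] at this
  linarith

lemma smul_add_one_sub_smul_mem (hK : Convex ℝ K) (hx : x ∈ K + r • B) (hk : k ∈ K) {l : ℝ}
    (hl₀ : 0 ≤ l) (hl₁ : l ≤ 1) : l • x + (1 - l) • k ∈ K + (l * r) • B := by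
  obtain ⟨k', hk', _, ⟨b, hb, rfl⟩, rfl⟩ := hx
  convert add_smul_mem_add_smul (hK hk' hk hl₀ (sub_nonneg.2 hl₁) (by ring)) hb (l * r) using 1
  simp only [smul_add, smul_smul]
  abel

lemma notMem_interior_of_bDist_eq (hK : Convex ℝ K) (hk : k ∈ K) (ht : 0 < t)
    (hz : bDist K B z = t) : z ∉ interior (K + t • B) := by
  intro hzi
  -- some `k + s • (z - k)` with `s > 1` is still in `K + t • B`, which puts `z` in `K + (t/s) • B`
  have hcont : ContinuousAt (fun s : ℝ => k + s • (z - k)) 1 := by fun_prop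
  have hev : ∀ᶠ s in 𝓝[>] (1 : ℝ), k + s • (z - k) ∈ interior (K + t • B) := by
    refine (hcont.eventually_mem ?_).filter_mono nhdsWithin_le_nhds
    simpa using isOpen_interior.mem_nhds hzi
  obtain ⟨s, hsC, hs : 1 < s⟩ := (hev.and self_mem_nhdsWithin).exists
  have hs0 : (0 : ℝ) < s := zero_lt_one.trans hs
  have hmem := smul_add_one_sub_smul_mem hK (interior_subset hsC) hk (inv_nonneg.2 hs0.le)
    (inv_le_one_of_one_le₀ hs.le)
  have hz' : s⁻¹ • (k + s • (z - k)) + (1 - s⁻¹) • k = z := by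
    rw [smul_add, smul_smul, inv_mul_cancel₀ hs0.ne', one_smul]; module
  rw [hz'] at hmem
  have := bDist_le (by positivity) hmem
  rw [hz] at this
  exact this.not_gt ((inv_mul_lt_iff₀ hs0).2 (lt_mul_left ht hs))

end BDist

section Support

variable {n : ℕ} {K B C : Set (EuclideanSpace ℝ (Fin n))}
  {q b c z z₁ z₂ u u₁ u₂ : EuclideanSpace ℝ (Fin n)} {t ρ : ℝ}

lemma exists_unit_mem_suppSet_of_notMem_interior (hC : Convex ℝ C) (hCi : (interior C).Nonempty)
    (hz : z ∈ C) (hzi : z ∉ interior C) : ∃ u, ‖u‖ = 1 ∧ z ∈ suppSet C u := by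
  obtain ⟨f, hf⟩ := geometric_hahn_banach_open_point hC.interior isOpen_interior hzi
  set v := (InnerProductSpace.toDual ℝ _).symm f
  have hv : ∀ w, inner ℝ v w = f w := fun w => InnerProductSpace.toDual_symm_apply
  have hle : C ⊆ {w | f w ≤ f z} := by
    refine subset_closure.trans ?_
    rw [← hC.closure_interior_eq_closure_of_nonempty_interior hCi]
    exact closure_minimal (fun w hw => (hf w hw).le) (isClosed_le f.continuous continuous_const)
  obtain ⟨a, ha⟩ := hCi
  have hv0 : v ≠ 0 := by
    rintro h
    simpa [← hv, h] using hf a ha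
  refine ⟨‖v‖⁻¹ • v, norm_smul_inv_norm hv0, hz, fun w hw => ?_⟩
  simp only [real_inner_smul_left, hv]
  exact mul_le_mul_of_nonneg_left (hle hw) (by positivity)

lemma mem_suppSet_of_add_smul_mem_suppSet (ht : 0 < t) (hq : q ∈ K) (hb : b ∈ B)
    (h : q + t • b ∈ suppSet (K + t • B) u) : q ∈ suppSet K u ∧ b ∈ suppSet B u := by
  refine ⟨⟨hq, fun k hk => ?_⟩, ⟨hb, fun b' hb' => ?_⟩⟩
  · have := h.2 _ (add_smul_mem_add_smul hk hb t)
    simp only [inner_add_right] at this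
    linarith
  · have := h.2 _ (add_smul_mem_add_smul hq hb' t)
    simp only [inner_add_right, real_inner_smul_right] at this
    exact le_of_mul_le_mul_left (by linarith) ht

lemma exists_unit_support_of_bDist_eq (hK : Convex ℝ K) (hB : Convex ℝ B)
    (hKi : (interior K).Nonempty) (hB0 : 0 ∈ B) (ht : 0 < t) (hq : q ∈ K) (hb : b ∈ B)
    (hd : bDist K B (q + t • b) = t) :
    ∃ u, ‖u‖ = 1 ∧ q + t • b ∈ suppSet (K + t • B) u ∧ q ∈ suppSet K u ∧ b ∈ suppSet B u := by
  have hKC : K ⊆ K + t • B := Set.subset_add_left K (Set.zero_mem_smul_set hB0)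
  obtain ⟨u, hu, hz⟩ := exists_unit_mem_suppSet_of_notMem_interior (hK.add (hB.smul t))
    (hKi.mono (interior_mono hKC)) (add_smul_mem_add_smul hq hb t)
    (notMem_interior_of_bDist_eq hK (interior_subset hKi.some_mem) ht hd)
  exact ⟨u, hu, hz, mem_suppSet_of_add_smul_mem_suppSet ht hq hb hz⟩

lemma le_inner_sub_of_closedBall_subset (hρ : 0 ≤ ρ) (hball : closedBall c ρ ⊆ C) (hu : ‖u‖ = 1)
    (hz : z ∈ suppSet C u) : ρ ≤ inner ℝ u (z - c) := by
  have := hz.2 (c + ρ • u) (hball (by simp [norm_smul, hu, abs_of_nonneg hρ]))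
  rw [inner_add_right, real_inner_smul_right, real_inner_self_eq_norm_sq, hu] at this
  rw [inner_sub_right]
  linarith

lemma two_mul_le_norm_sub_add (hρ : 0 ≤ ρ) (hball : closedBall c ρ ⊆ C) (hu₁ : ‖u₁‖ = 1)
    (hu₂ : ‖u₂‖ = 1) (hz₁ : z₁ ∈ suppSet C u₁) (hz₂ : z₂ ∈ suppSet C u₂) :
    2 * ρ ≤ ‖z₁ - z₂‖ + ‖u₁ + u₂‖ * ‖z₂ - c‖ := by
  have h₁ := le_inner_sub_of_closedBall_subset hρ hball hu₁ hz₁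
  have h₂ := le_inner_sub_of_closedBall_subset hρ hball hu₂ hz₂
  have hsplit : inner ℝ u₁ (z₁ - c) + inner ℝ u₂ (z₂ - c)
      = inner ℝ u₁ (z₁ - z₂) + inner ℝ (u₁ + u₂) (z₂ - c) := by
    simp only [inner_sub_right, inner_add_left]; ring
  have hcs₁ := real_inner_le_norm u₁ (z₁ - z₂)
  have hcs₂ := real_inner_le_norm (u₁ + u₂) (z₂ - c)
  rw [hu₁, one_mul] at hcs₁
  linarith

end Support

lemma adim_eq_zero_iff {n : ℕ} {s : Set (EuclideanSpace ℝ (Fin n))} :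
    adim s = 0 ↔ s.Subsingleton := by
  rw [adim, Submodule.finrank_eq_zero, direction_affineSpan, vectorSpan_eq_bot_iff_subsingleton]

def GeneralRelativePosition {n : ℕ} (K B : Set (EuclideanSpace ℝ (Fin n))) : Prop :=
  ∀ u : EuclideanSpace ℝ (Fin n), ‖u‖ = 1 → adim (suppSet K u) + adim (suppSet B u) ≤ 1

lemma GeneralRelativePosition.eq_of_mem_suppSet {n : ℕ} {K B : Set (EuclideanSpace ℝ (Fin n))}
    (h : GeneralRelativePosition K B) {u q₁ q₂ b₁ b₂ : EuclideanSpace ℝ (Fin n)} (hu : ‖u‖ = 1)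
    (hq₁ : q₁ ∈ suppSet K u) (hq₂ : q₂ ∈ suppSet K u) (hq : q₁ ≠ q₂)
    (hb₁ : b₁ ∈ suppSet B u) (hb₂ : b₂ ∈ suppSet B u) : b₁ = b₂ := by
  have hK : adim (suppSet K u) ≠ 0 := fun h0 => hq (adim_eq_zero_iff.1 h0 hq₁ hq₂)
  exact adim_eq_zero_iff.1 (by have := h u hu; omega) hb₁ hb₂

lemma gram_det_eq_zero (u₁ u₂ v : EuclideanSpace ℝ (Fin 2)) :
    (‖u₁‖ ^ 2 * ‖u₂‖ ^ 2 - inner ℝ u₁ u₂ ^ 2) * ‖v‖ ^ 2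
      = ‖u₁‖ ^ 2 * inner ℝ u₂ v ^ 2 + ‖u₂‖ ^ 2 * inner ℝ u₁ v ^ 2
        - 2 * inner ℝ u₁ u₂ * inner ℝ u₁ v * inner ℝ u₂ v := by
  simp only [← real_inner_self_eq_norm_sq, PiLp.inner_apply, Fin.sum_univ_two, RCLike.inner_apply,
    conj_trivial]
  ring

lemma norm_sub_mul_norm_add_mul_norm_le {u₁ u₂ v : EuclideanSpace ℝ (Fin 2)} (hu₁ : ‖u₁‖ = 1)
    (hu₂ : ‖u₂‖ = 1) (h₁ : 0 ≤ inner ℝ u₁ v) (h₂ : inner ℝ u₂ v ≤ 0) :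
    ‖u₁ - u₂‖ * ‖u₁ + u₂‖ * ‖v‖ ≤ 2 * inner ℝ (u₁ - u₂) v := by
  have hgram := gram_det_eq_zero u₁ u₂ v
  have hp : inner ℝ u₁ u₂ ≤ 1 := by simpa [hu₁, hu₂] using real_inner_le_norm u₁ u₂
  have hsub : ‖u₁ - u₂‖ ^ 2 = 2 - 2 * inner ℝ u₁ u₂ := by
    rw [norm_sub_sq_real, hu₁, hu₂]; ring
  have hadd : ‖u₁ + u₂‖ ^ 2 = 2 + 2 * inner ℝ u₁ u₂ := by
    rw [norm_add_sq_real, hu₁, hu₂]; ring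
  rw [hu₁, hu₂] at hgram
  rw [inner_sub_left]
  refine (pow_le_pow_iff_left₀ (by positivity) (by linarith) two_ne_zero).1 ?_
  rw [mul_pow, mul_pow, hsub, hadd]
  -- `(1 - ⟪u₁,u₂⟫²)‖v‖² = a² + b² - 2⟪u₁,u₂⟫ab ≤ (a - b)²` for `a = ⟪u₁,v⟫ ≥ 0 ≥ b = ⟪u₂,v⟫`
  nlinarith [mul_nonneg (mul_nonneg h₁ (neg_nonneg.2 h₂)) (sub_nonneg.2 hp)]

section PlaneSupport

variable {K B : Set (EuclideanSpace ℝ (Fin 2))} {q₁ q₂ b₁ b₂ u₁ u₂ : EuclideanSpace ℝ (Fin 2)}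
  {t : ℝ}

lemma norm_add_mul_norm_sub_le (hgrp : GeneralRelativePosition K B) (ht : 0 ≤ t)
    (hu₁ : ‖u₁‖ = 1) (hu₂ : ‖u₂‖ = 1) (hq₁ : q₁ ∈ suppSet K u₁) (hq₂ : q₂ ∈ suppSet K u₂)
    (hb₁ : b₁ ∈ suppSet B u₁) (hb₂ : b₂ ∈ suppSet B u₂) :
    ‖u₁ + u₂‖ * ‖q₁ - q₂‖ ≤ 2 * ‖(q₁ + t • b₁) - (q₂ + t • b₂)‖ := by
  by_cases hu : u₁ = u₂
  · subst hu
    by_cases hq : q₁ = q₂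
    · simp [hq]
    rw [hgrp.eq_of_mem_suppSet hu₁ hq₁ hq₂ hq hb₁ hb₂, add_sub_add_right_eq_sub, ← two_smul ℝ u₁,
      norm_smul, hu₁, Real.norm_two, mul_one]
  have hsplit : (q₁ + t • b₁) - (q₂ + t • b₂) = (q₁ - q₂) + t • (b₁ - b₂) := by module
  have hQ₁ : 0 ≤ inner ℝ u₁ (q₁ - q₂) := by rw [inner_sub_right]; linarith [hq₁.2 q₂ hq₂.1]
  have hQ₂ : inner ℝ u₂ (q₁ - q₂) ≤ 0 := by rw [inner_sub_right]; linarith [hq₂.2 q₁ hq₁.1]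
  have hβ : 0 ≤ inner ℝ (u₁ - u₂) (b₁ - b₂) := by
    simp only [inner_sub_left, inner_sub_right]; linarith [hb₁.2 b₂ hb₂.1, hb₂.2 b₁ hb₁.1]
  have hcone := norm_sub_mul_norm_add_mul_norm_le hu₁ hu₂ hQ₁ hQ₂
  have hcs := real_inner_le_norm (u₁ - u₂) ((q₁ - q₂) + t • (b₁ - b₂))
  rw [inner_add_right, real_inner_smul_right] at hcs
  refine le_of_mul_le_mul_left ?_ (norm_pos_iff.2 (sub_ne_zero.2 hu))
  rw [hsplit]
  nlinarith [mul_nonneg ht hβ]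

end PlaneSupport

lemma closedBall_add_mul_subset {n : ℕ} {K B : Set (EuclideanSpace ℝ (Fin n))}
    {k₀ : EuclideanSpace ℝ (Fin n)} {ρK ρB t : ℝ} (hρK : 0 ≤ ρK) (hρB : 0 ≤ ρB) (ht : 0 ≤ t)
    (hK : closedBall k₀ ρK ⊆ K) (hB : closedBall 0 ρB ⊆ B) :
    closedBall k₀ (ρK + t * ρB) ⊆ K + t • B := by
  calc closedBall k₀ (ρK + t * ρB) = closedBall k₀ ρK + t • closedBall 0 ρB := by
        rw [smul_closedBall _ _ hρB, smul_zero, closedBall_add_closedBall hρK (by positivity),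
          add_zero, Real.norm_of_nonneg ht]
    _ ⊆ K + t • B := Set.add_subset_add hK (Set.smul_set_mono hB)

lemma add_mul_le_div_add_div_mul {a b c d t : ℝ} (ha : 0 ≤ a) (hb : 0 < b) (hc : 0 ≤ c)
    (hd : 0 < d) (ht : 0 ≤ t) : a + t * c ≤ (a / b + c / d) * (b + t * d) := by
  have : (a / b + c / d) * (b + t * d) = a + t * c + (a / b * (t * d) + c / d * b) := by
    field_simp; ring
  rw [this]
  linarith [show 0 ≤ a / b * (t * d) + c / d * b by positivity]

section Level

variable {K B : Set (EuclideanSpace ℝ (Fin 2))} {k₀ q₁ q₂ b₁ b₂ : EuclideanSpace ℝ (Fin 2)}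
  {ρK RK ρB RB t : ℝ}

theorem norm_sub_le_of_bDist_eq (hK : Convex ℝ K) (hB : Convex ℝ B)
    (hgrp : GeneralRelativePosition K B) (hρK : 0 < ρK) (hρB : 0 < ρB)
    (hKin : closedBall k₀ ρK ⊆ K) (hKout : K ⊆ closedBall k₀ RK)
    (hBin : closedBall 0 ρB ⊆ B) (hBout : B ⊆ closedBall 0 RB) (ht : 0 < t)
    (hq₁ : q₁ ∈ K) (hq₂ : q₂ ∈ K) (hb₁ : b₁ ∈ B) (hb₂ : b₂ ∈ B)
    (hd₁ : bDist K B (q₁ + t • b₁) = t) (hd₂ : bDist K B (q₂ + t • b₂) = t) :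
    ‖q₁ - q₂‖ ≤ (2 * RK / ρK + RB / ρB) * ‖(q₁ + t • b₁) - (q₂ + t • b₂)‖ := by
  have hKi : (interior K).Nonempty :=
    ⟨k₀, interior_mono hKin (ball_subset_interior_closedBall (mem_ball_self hρK))⟩
  have hB0 : 0 ∈ B := hBin (mem_closedBall_self hρB.le)
  obtain ⟨u₁, hu₁, hz₁, hq₁', hb₁'⟩ := exists_unit_support_of_bDist_eq hK hB hKi hB0 ht hq₁ hb₁ hd₁
  obtain ⟨u₂, hu₂, hz₂, hq₂', hb₂'⟩ := exists_unit_support_of_bDist_eq hK hB hKi hB0 ht hq₂ hb₂ hd₂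
  have hcone := norm_add_mul_norm_sub_le hgrp ht.le hu₁ hu₂ hq₁' hq₂' hb₁' hb₂'
  have hball := two_mul_le_norm_sub_add (by positivity)
    (closedBall_add_mul_subset hρK.le hρB.le ht.le hKin hBin) hu₁ hu₂ hz₁ hz₂
  have hRK : 0 ≤ RK := dist_self k₀ ▸ hKout (hKin (mem_closedBall_self hρK.le))
  have hRB : 0 ≤ RB := by simpa using hBout hB0
  have hQ : ‖q₁ - q₂‖ ≤ 2 * RK := by
    have := dist_triangle_right q₁ q₂ k₀
    rw [dist_eq_norm] at this
    linarith [mem_closedBall.1 (hKout hq₁), mem_closedBall.1 (hKout hq₂)]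
  have hD : ‖q₂ + t • b₂ - k₀‖ ≤ RK + t * RB := by
    calc ‖q₂ + t • b₂ - k₀‖ = ‖(q₂ - k₀) + t • b₂‖ := by rw [sub_add_eq_add_sub]
      _ ≤ ‖q₂ - k₀‖ + t * ‖b₂‖ :=
          (norm_add_le _ _).trans_eq (by rw [norm_smul, Real.norm_of_nonneg ht.le])
      _ ≤ RK + t * RB := by
          gcongr
          · exact mem_closedBall_iff_norm.1 (hKout hq₂)
          · exact mem_closedBall_zero_iff.1 (hBout hb₂)
  set Q := ‖q₁ - q₂‖
  set w := ‖(q₁ + t • b₁) - (q₂ + t • b₂)‖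
  set D := ‖q₂ + t • b₂ - k₀‖
  have hkey : 2 * (ρK + t * ρB) * Q ≤ 2 * ((2 * RK + t * RB) * w) := by
    calc 2 * (ρK + t * ρB) * Q ≤ (w + ‖u₁ + u₂‖ * D) * Q := by gcongr
      _ = w * Q + D * (‖u₁ + u₂‖ * Q) := by ring
      _ ≤ w * (2 * RK) + (RK + t * RB) * (2 * w) := by gcongr
      _ = 2 * ((2 * RK + t * RB) * w) := by ring
  refine le_of_mul_le_mul_left ?_ (by positivity : 0 < ρK + t * ρB)
  calc (ρK + t * ρB) * Q ≤ (2 * RK + t * RB) * w := by linarith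
    _ ≤ (2 * RK / ρK + RB / ρB) * (ρK + t * ρB) * w := by
        gcongr; exact add_mul_le_div_add_div_mul (by positivity) hρK hRB hρB ht.le
    _ = (ρK + t * ρB) * ((2 * RK / ρK + RB / ρB) * w) := by ring

end Level

lemma norm_sub_add_smul_le {n : ℕ} {K B : Set (EuclideanSpace ℝ (Fin n))}
    {x y q b : EuclideanSpace ℝ (Fin n)} {ρB RB t : ℝ} (hB : Convex ℝ B) (hρB : 0 < ρB)
    (hBin : closedBall 0 ρB ⊆ B) (hBout : B ⊆ closedBall 0 RB) (ht : 0 ≤ t)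
    (hx : x ∈ K + t • B) (hb : b ∈ B) (hy : y = q + bDist K B y • b) (hty : t ≤ bDist K B y) :
    ‖x - (q + t • b)‖ ≤ (1 + RB / ρB) * ‖x - y‖ := by
  have hd := bDist_le_add_norm_sub_div hB hρB hBin ht hx y
  have hyy : ‖y - (q + t • b)‖ ≤ RB / ρB * ‖x - y‖ := by
    calc ‖y - (q + t • b)‖ = (bDist K B y - t) * ‖b‖ := by
          rw [hy, add_sub_add_left_eq_sub, ← sub_smul, ← hy, norm_smul,
            Real.norm_of_nonneg (sub_nonneg.2 hty)]
      _ ≤ ‖x - y‖ / ρB * RB := by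
          rw [norm_sub_rev x]
          gcongr
          · linarith
          · exact mem_closedBall_zero_iff.1 (hBout hb)
      _ = RB / ρB * ‖x - y‖ := by ring
  calc ‖x - (q + t • b)‖ ≤ ‖x - y‖ + ‖y - (q + t • b)‖ := norm_sub_le_norm_sub_add_norm_sub _ _ _
    _ ≤ (1 + RB / ρB) * ‖x - y‖ := by linarith

lemma exists_closedBall_subset_subset_closedBall {α : Type*} [PseudoMetricSpace α] {C : Set α}
    {c : α} (hC : Bornology.IsBounded C) (hc : c ∈ interior C) :
    ∃ ρ R : ℝ, 0 < ρ ∧ closedBall c ρ ⊆ C ∧ C ⊆ closedBall c R := by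
  obtain ⟨ρ, hρ, hball⟩ := nhds_basis_closedBall.mem_iff.1 (mem_interior_iff_mem_nhds.1 hc)
  obtain ⟨R, hR⟩ := hC.subset_closedBall c
  exact ⟨ρ, R, hρ, hball, hR⟩

theorem bProjection_lipschitz (K B : Set (EuclideanSpace ℝ (Fin 2)))
    (hKc : IsCompact K) (hKconv : Convex ℝ K) (hKint : (interior K).Nonempty)
    (hBc : IsCompact B) (hBconv : Convex ℝ B) (hB0 : (0 : EuclideanSpace ℝ (Fin 2)) ∈ interior B)
    (hgrp : ∀ u : EuclideanSpace ℝ (Fin 2), ‖u‖ = 1 → adim (suppSet K u) + adim (suppSet B u) ≤ 1)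
    (p : EuclideanSpace ℝ (Fin 2) → EuclideanSpace ℝ (Fin 2))
    (hp : ∀ x ∉ K, p x ∈ frontier K ∧ ∃ b ∈ frontier B, x = p x + bDist K B x • b) :
    ∃ C : ℝ, ∀ x ∉ K, ∀ y ∉ K, ‖p x - p y‖ ≤ C * ‖x - y‖ := by
  obtain ⟨k₀, hk₀⟩ := hKint
  obtain ⟨ρK, RK, hρK, hKin, hKout⟩ := exists_closedBall_subset_subset_closedBall hKc.isBounded hk₀
  obtain ⟨ρB, RB, hρB, hBin, hBout⟩ := exists_closedBall_subset_subset_closedBall hBc.isBounded hB0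
  have hRK : 0 ≤ RK := dist_self k₀ ▸ hKout (interior_subset hk₀)
  have hRB : 0 ≤ RB := by simpa using hBout (interior_subset hB0)
  refine ⟨(2 * RK / ρK + RB / ρB) * (1 + RB / ρB), fun x hx y hy => ?_⟩
  wlog hxy : bDist K B x ≤ bDist K B y generalizing x y
  · rw [norm_sub_rev, norm_sub_rev x]
    exact this y hy x hx (le_of_not_ge hxy)
  obtain ⟨hq₁, b₁, hb₁, hx'⟩ := hp x hx
  obtain ⟨hq₂, b₂, hb₂, hy'⟩ := hp y hy
  replace hq₁ := hKc.isClosed.frontier_subset hq₁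
  replace hq₂ := hKc.isClosed.frontier_subset hq₂
  replace hb₁ := hBc.isClosed.frontier_subset hb₁
  replace hb₂ := hBc.isClosed.frontier_subset hb₂
  generalize p x = q₁ at hq₁ hx' ⊢
  generalize p y = q₂ at hq₂ hy' ⊢
  generalize hd₁ : bDist K B x = t at hx' hxy
  subst hx'
  have ht : 0 < t := (hd₁ ▸ bDist_nonneg).lt_of_ne fun h => hx (by rwa [← h, zero_smul, add_zero])
  have hd₂ := bDist_add_smul_eq_of_le hBconv hq₂ hb₂ ht.le hxy (by rw [← hy'])
  calc ‖q₁ - q₂‖ ≤ (2 * RK / ρK + RB / ρB) * ‖(q₁ + t • b₁) - (q₂ + t • b₂)‖ :=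
        norm_sub_le_of_bDist_eq hKconv hBconv hgrp hρK hρB hKin hKout hBin hBout ht
          hq₁ hq₂ hb₁ hb₂ hd₁ hd₂
    _ ≤ (2 * RK / ρK + RB / ρB) * ((1 + RB / ρB) * ‖q₁ + t • b₁ - y‖) := by
        gcongr
        exact norm_sub_add_smul_le hBconv hρB hBin hBout ht.le (add_smul_mem_add_smul hq₁ hb₁ t)
          hb₂ hy' hxy
    _ = _ := by ring
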